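/- arXiv:1507.07460 — 2 statements merged into one kernel-verified Lean document; each statement's English description precedes it below -/
import Mathlib

section
/- Let A be a nonnegative weakly irreducible tensor of order m and dimension n, and let x be a positive eigenvector of A corresponding to rho(A). If gamma = (i_1, i_2, ..., i_p, i_{p+1} = i_1) is a circuit in G_A such that for each j, x_{i_{j+1}} = max{x_k : k is an out-neighbor of i_j}, then rho(A) <= (prod_{j=1}^p K_{i_j})^{1/p}, where K_i is the i-th slice sum of A. -/
open scoped BigOperators
open Finset

/-- The arc relation of the digraph `G_A` of an order-`m` dimension-`n` tensor `A`,
    whose entries are indexed by a head index and a tail of `m - 1` indices: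
    `(i, j)` is an arc when some entry `a_{i i_2 ... i_m} ≠ 0` has `j` among `i_2, ..., i_m`. -/
def tArc (m n : ℕ) (A : Fin n → (Fin (m - 1) → Fin n) → ℝ) (i j : Fin n) : Prop :=
  ∃ t : Fin (m - 1) → Fin n, A i t ≠ 0 ∧ j ∈ Set.range t

/-- A digraph (given by its arc relation) is strongly connected. -/
def StronglyConnected {n : ℕ} (arc : Fin n → Fin n → Prop) : Prop :=
  ∀ i j : Fin n, Relation.ReflTransGen arc i j

/-- `γ 0, γ 1, ..., γ p = γ 0` is a circuit (closed directed walk, loops allowed)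
    of length `p` in the digraph with arc relation `arc`. -/
def IsCircuit {n : ℕ} (arc : Fin n → Fin n → Prop) (p : ℕ) (γ : ℕ → Fin n) : Prop :=
  0 < p ∧ γ p = γ 0 ∧ ∀ j < p, arc (γ j) (γ (j + 1))

/-- `lam` is an eigenvalue of the order-`m` dimension-`n` real tensor `A`:
    there is a nonzero complex vector `x` with `A x^{m-1} = lam x^{[m-1]}`. -/
def IsEig (m n : ℕ) (A : Fin n → (Fin (m - 1) → Fin n) → ℝ) (lam : ℂ) : Prop :=
  ∃ x : Fin n → ℂ, x ≠ 0 ∧ ∀ i : Fin n,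
    ∑ t : Fin (m - 1) → Fin n, (A i t : ℂ) * ∏ j, x (t j) = lam * x i ^ (m - 1)

/-- The spectral radius of a tensor: the supremum of moduli of its eigenvalues. -/
noncomputable def specRad (m n : ℕ) (A : Fin n → (Fin (m - 1) → Fin n) → ℝ) : ℝ :=
  sSup {r : ℝ | ∃ lam : ℂ, IsEig m n A lam ∧ ‖lam‖ = r}

/-- The `i`-th slice sum `K_i = ∑_{i_2,...,i_m} a_{i i_2 ... i_m}`. -/
def sliceSum (m n : ℕ) (A : Fin n → (Fin (m - 1) → Fin n) → ℝ) (i : Fin n) : ℝ :=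
  ∑ t : Fin (m - 1) → Fin n, A i t

/-- `(A x^{m-1})_i = ∑_{i_2,...,i_m} a_{i i_2 ... i_m} x_{i_2} ⋯ x_{i_m}`. -/
def Ax (m n : ℕ) (A : Fin n → (Fin (m - 1) → Fin n) → ℝ) (x : Fin n → ℝ) (i : Fin n) : ℝ :=
  ∑ t : Fin (m - 1) → Fin n, A i t * ∏ j, x (t j)

/-!
Evaluating the eigenvalue equation at `γ j` and bounding each `x_u` with `u` an out-neighbour of
`γ j` by `x_{γ (j+1)}` gives `ρ x_{γ j}^{m-1} ≤ K_{γ j} x_{γ (j+1)}^{m-1}`. Multiplying these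
inequalities around the circuit, the positive factors `x_{γ j}^{m-1}` cancel, so
`ρ^p ≤ ∏ K_{γ j}`; take `p`-th roots.
-/

theorem Finset.prod_range_succ_eq_of_cyclic {M : Type*} [CommMonoid M] {g : ℕ → M} {p : ℕ}
    (hcyc : g p = g 0) : ∏ j ∈ range p, g (j + 1) = ∏ j ∈ range p, g j := by
  cases p with
  | zero => rfl
  | succ q => rw [prod_range_succ, hcyc, prod_range_succ' g]

theorem pow_le_prod_of_mul_le_mul_succ {R : Type*} [CommRing R] [LinearOrder R]
    [IsStrictOrderedRing R] {ρ : R} {K g : ℕ → R} {p : ℕ} (hρ : 0 ≤ ρ) (hg : ∀ j, 0 < g j)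
    (hcyc : g p = g 0) (hstep : ∀ j < p, ρ * g j ≤ K j * g (j + 1)) :
    ρ ^ p ≤ ∏ j ∈ range p, K j := by
  have hprod : ∏ j ∈ range p, (ρ * g j) ≤ ∏ j ∈ range p, (K j * g (j + 1)) :=
    prod_le_prod (fun j _ => mul_nonneg hρ (hg j).le) fun j hj => hstep j (mem_range.mp hj)
  rw [prod_mul_distrib, prod_mul_distrib, prod_range_succ_eq_of_cyclic hcyc, prod_const,
    card_range] at hprod
  exact le_of_mul_le_mul_right hprod (prod_pos fun j _ => hg j)

theorem Ax_nonneg {m n : ℕ} {A : Fin n → (Fin (m - 1) → Fin n) → ℝ} (hA : ∀ i t, 0 ≤ A i t)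
    {x : Fin n → ℝ} (hx : ∀ i, 0 ≤ x i) (i : Fin n) : 0 ≤ Ax m n A x i :=
  sum_nonneg fun t _ => mul_nonneg (hA i t) (prod_nonneg fun _ _ => hx _)

/-- Only the tail indices `t` with `A i t ≠ 0` contribute, and all their entries are
out-neighbours of `i`. -/
theorem Ax_le_sliceSum_mul_pow {m n : ℕ} {A : Fin n → (Fin (m - 1) → Fin n) → ℝ}
    (hA : ∀ i t, 0 ≤ A i t) {x : Fin n → ℝ} (hx : ∀ i, 0 ≤ x i) {i : Fin n} {c : ℝ}
    (hc : ∀ u, tArc m n A i u → x u ≤ c) :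
    Ax m n A x i ≤ sliceSum m n A i * c ^ (m - 1) := by
  rw [Ax, sliceSum, sum_mul]
  refine sum_le_sum fun t _ => ?_
  by_cases ht : A i t = 0
  · simp [ht]
  · have hbound : ∏ k, x (t k) ≤ ∏ _k : Fin (m - 1), c :=
      prod_le_prod (fun k _ => hx _) fun k _ => hc (t k) ⟨t, ht, k, rfl⟩
    rw [prod_const, card_univ, Fintype.card_fin] at hbound
    exact mul_le_mul_of_nonneg_left hbound (hA i t)

theorem stmt16_general (m n : ℕ)
    (A : Fin n → (Fin (m - 1) → Fin n) → ℝ) (hA : ∀ i t, 0 ≤ A i t)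
    (x : Fin n → ℝ) (hx : ∀ i, 0 < x i)
    (heig : ∀ i : Fin n, Ax m n A x i = specRad m n A * x i ^ (m - 1))
    (p : ℕ) (γ : ℕ → Fin n) (hγ : IsCircuit (tArc m n A) p γ)
    (hmax : ∀ j < p, ∀ u : Fin n, tArc m n A (γ j) u → x u ≤ x (γ (j + 1))) :
    specRad m n A ≤ (∏ j ∈ Finset.range p, sliceSum m n A (γ j)) ^ ((p : ℝ)⁻¹) := by
  obtain ⟨hp, hcyc, -⟩ := hγ
  have hx0 : ∀ i, 0 ≤ x i := fun i => (hx i).le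
  have hρ : 0 ≤ specRad m n A := by
    have h := Ax_nonneg hA hx0 (γ 0)
    rw [heig] at h
    exact nonneg_of_mul_nonneg_left h (pow_pos (hx _) _)
  have hρp : specRad m n A ^ p ≤ ∏ j ∈ range p, sliceSum m n A (γ j) :=
    pow_le_prod_of_mul_le_mul_succ hρ (fun j => pow_pos (hx (γ j)) (m - 1)) (by rw [hcyc])
      fun j hj => heig (γ j) ▸ Ax_le_sliceSum_mul_pow hA hx0 (hmax j hj)
  calc specRad m n A = (specRad m n A ^ p) ^ ((p : ℝ)⁻¹) :=
        (Real.pow_rpow_inv_natCast hρ hp.ne').symm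
    _ ≤ _ := Real.rpow_le_rpow (pow_nonneg hρ p) hρp (by positivity)

theorem stmt16 (m n : ℕ) (hm : 2 ≤ m) (hn : 0 < n)
    (A : Fin n → (Fin (m - 1) → Fin n) → ℝ) (hA : ∀ i t, 0 ≤ A i t)
    (hirr : StronglyConnected (tArc m n A))
    (x : Fin n → ℝ) (hx : ∀ i, 0 < x i)
    (heig : ∀ i : Fin n, Ax m n A x i = specRad m n A * x i ^ (m - 1))
    (p : ℕ) (γ : ℕ → Fin n) (hγ : IsCircuit (tArc m n A) p γ)
    (hmax : ∀ j < p, ∀ u : Fin n, tArc m n A (γ j) u → x u ≤ x (γ (j + 1))) :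
    specRad m n A ≤ (∏ j ∈ Finset.range p, sliceSum m n A (γ j)) ^ ((p : ℝ)⁻¹) :=
  stmt16_general m n A hA x hx heig p γ hγ hmax
end

section
/- Let M be an n x n nonnegative matrix whose associated digraph G_M (arc (i,j) iff m_{ij} != 0) is strongly connected, with row sums r_1,...,r_n. Then min over circuits gamma in G_M of (prod_{i in gamma} r_i)^{1/|gamma|} <= rho(M) <= max over circuits gamma in G_M of (prod_{i in gamma} r_i)^{1/|gamma|}. -/
/-!
Both bounds come from following a greedy walk in `G_M` until it closes up into a circuit.
If `M v = λ v` with `λ ≠ 0`, then `|λ| |v_i| ≤ ∑_j m_ij |v_j| ≤ r_i |v_σ(i)|`, where `σ(i)`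
maximizes `|v_j|` over the out-neighbours `j` of `i`; multiplying these inequalities around the
circuit that `σ` eventually enters, the factors `|v|` cancel and `|λ|^p ≤ ∏ r_i`.
For the lower bound take `t > ρ(M)`: by Gelfand's formula the Neumann series
`y = ∑_k t^{-k} M^k 1` converges, `y ≥ 1` and `M y ≤ t y`. Now `σ(i)` minimizing `y_j` over the
out-neighbours of `i` gives `r_i y_σ(i) ≤ t y_i`, and the same cancellation yields a circuit
with `∏ r_i ≤ t^p`.
-/

open scoped BigOperators
open Finset

/-- The spectral radius of a real square matrix: the supremum of the moduli of
    its complex eigenvalues. -/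
noncomputable def mSpecRad (n : ℕ) (M : Matrix (Fin n) (Fin n) ℝ) : ℝ :=
  sSup {r : ℝ | ∃ lam : ℂ, lam ∈ spectrum ℂ (M.map (Complex.ofReal)) ∧ ‖lam‖ = r}

open Filter

theorem Finset.prod_range_succ_eq_prod_range_of_eq {β : Type*} [CommMonoid β] {f : ℕ → β}
    {p : ℕ} (h : f p = f 0) : ∏ j ∈ range p, f (j + 1) = ∏ j ∈ range p, f j := by
  cases p with
  | zero => simp
  | succ q => rw [prod_range_succ, prod_range_succ', h]

theorem Function.exists_iterate_add_eq {α : Type*} [Finite α] (f : α → α) (x : α) :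
    ∃ a p, 0 < p ∧ f^[a + p] x = f^[a] x := by
  obtain ⟨k, l, hkl, h⟩ := Finite.exists_ne_map_eq_of_infinite fun k => f^[k] x
  rcases hkl.lt_or_gt with hlt | hlt
  · exact ⟨k, l - k, by omega, by rw [Nat.add_sub_cancel' hlt.le]; exact h.symm⟩
  · exact ⟨l, k - l, by omega, by rw [Nat.add_sub_cancel' hlt.le]; exact h⟩

theorem exists_ne_zero_sum_mul_le {ι : Type*} [Fintype ι] {c : ι → ℝ} (hc : ∀ i, 0 ≤ c i)
    (hc₀ : ∃ i, c i ≠ 0) (x : ι → ℝ) : ∃ j, c j ≠ 0 ∧ ∑ i, c i * x i ≤ (∑ i, c i) * x j := by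
  classical
  obtain ⟨j, hj, hmax⟩ := (univ.filter fun i => c i ≠ 0).exists_max_image x
    (by simpa [Finset.Nonempty] using hc₀)
  refine ⟨j, (mem_filter.mp hj).2, ?_⟩
  rw [sum_mul]
  refine sum_le_sum fun i _ => ?_
  by_cases hi : c i = 0
  · simp [hi]
  · exact mul_le_mul_of_nonneg_left (hmax i (mem_filter.mpr ⟨mem_univ _, hi⟩)) (hc i)

theorem exists_ne_zero_le_sum_mul {ι : Type*} [Fintype ι] {c : ι → ℝ} (hc : ∀ i, 0 ≤ c i)
    (hc₀ : ∃ i, c i ≠ 0) (x : ι → ℝ) : ∃ j, c j ≠ 0 ∧ (∑ i, c i) * x j ≤ ∑ i, c i * x i := by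
  obtain ⟨j, hj, h⟩ := exists_ne_zero_sum_mul_le hc hc₀ (-x)
  exact ⟨j, hj, by simpa [sum_neg_distrib] using h⟩

theorem summable_norm_pow_div_pow_of_spectralRadius_lt {A : Type*} [NormedRing A]
    [NormedAlgebra ℂ A] [CompleteSpace A] {a : A} {t : ℝ}
    (h : spectralRadius ℂ a < ENNReal.ofReal t) : Summable fun k : ℕ => ‖a ^ k‖ / t ^ k := by
  obtain ⟨s, hs, has, hst⟩ := ENNReal.lt_iff_exists_real_btwn.mp h
  obtain ⟨hst, ht⟩ := ENNReal.ofReal_lt_ofReal_iff'.mp hst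
  have hev : ∀ᶠ k : ℕ in atTop, ‖‖a ^ k‖ / t ^ k‖ ≤ (s / t) ^ k := by
    filter_upwards [(spectrum.pow_norm_pow_one_div_tendsto_nhds_spectralRadius a).eventually_lt_const
      has, eventually_gt_atTop 0] with k hk hk₀
    rw [ENNReal.ofReal_lt_ofReal_iff_of_nonneg (by positivity), one_div,
      Real.rpow_inv_lt_iff_of_pos (norm_nonneg _) hs (by positivity), Real.rpow_natCast] at hk
    rw [Real.norm_of_nonneg (by positivity), div_pow]
    gcongr
  exact (summable_geometric_of_lt_one (by positivity) ((div_lt_one ht).mpr hst))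
    |>.of_norm_bounded_eventually_nat hev

section

variable {n : ℕ}

theorem StronglyConnected.exists_arc {arc : Fin n → Fin n → Prop} (h : StronglyConnected arc)
    {i₀ j₀ : Fin n} (h₀ : arc i₀ j₀) (i : Fin n) : ∃ j, arc i j := by
  rcases (h i i₀).cases_head with rfl | ⟨j, hj, -⟩
  · exact ⟨j₀, h₀⟩
  · exact ⟨j, hj⟩

theorem exists_isCircuit_prod_le_prod {arc : Fin n → Fin n → Prop} {f : Fin n → Fin n}
    {a b w : Fin n → ℝ} (ha : ∀ i, 0 < a i) (hw : ∀ i, 0 ≤ w i)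
    (hf : ∀ i, 0 < w i → arc i (f i)) (h : ∀ i, a i * w i ≤ b i * w (f i))
    {i₀ : Fin n} (hi₀ : 0 < w i₀) :
    ∃ p γ, IsCircuit arc p γ ∧ ∏ j ∈ range p, a (γ j) ≤ ∏ j ∈ range p, b (γ j) := by
  have hpos : ∀ k, 0 < w (f^[k] i₀) := by
    intro k
    induction k with
    | zero => exact hi₀
    | succ k ih =>
      rw [Function.iterate_succ_apply']
      refine (hw _).lt_of_ne fun h₀ => ?_
      have := (mul_pos (ha _) ih).trans_le (h _)
      rw [← h₀, mul_zero] at this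
      exact this.false
  obtain ⟨a₀, p, hp, hper⟩ := Function.exists_iterate_add_eq f i₀
  set γ : ℕ → Fin n := fun j => f^[a₀ + j] i₀
  have hγ : ∀ j, γ (j + 1) = f (γ j) := fun j => Function.iterate_succ_apply' f (a₀ + j) i₀
  refine ⟨p, γ, ⟨hp, hper, fun j _ => hγ j ▸ hf _ (hpos _)⟩, ?_⟩
  refine le_of_mul_le_mul_right ?_ (prod_pos fun j (_ : j ∈ range p) => hpos (a₀ + j))
  calc (∏ j ∈ range p, a (γ j)) * ∏ j ∈ range p, w (γ j)
      = ∏ j ∈ range p, a (γ j) * w (γ j) := prod_mul_distrib.symm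
    _ ≤ ∏ j ∈ range p, b (γ j) * w (γ (j + 1)) :=
        prod_le_prod (fun j _ => (mul_pos (ha _) (hpos _)).le) fun j _ => hγ j ▸ h _
    _ = (∏ j ∈ range p, b (γ j)) * ∏ j ∈ range p, w (γ j) := by
        rw [prod_mul_distrib, prod_range_succ_eq_prod_range_of_eq (f := fun j => w (γ j))
          (congrArg w hper)]

variable {M : Matrix (Fin n) (Fin n) ℝ}

theorem exists_isCircuit_norm_pow_le (hM : ∀ i j, 0 ≤ M i j) {μ : ℂ}
    (hμ : μ ∈ spectrum ℂ (M.map Complex.ofReal)) (hμ₀ : μ ≠ 0) :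
    ∃ p γ, IsCircuit (fun i j : Fin n => M i j ≠ 0) p γ ∧
      ‖μ‖ ^ p ≤ ∏ j ∈ range p, ∑ l, M (γ j) l := by
  have hμ' : Module.End.HasEigenvalue (Matrix.toLin' (M.map Complex.ofReal)) μ :=
    Module.End.hasEigenvalue_iff_mem_spectrum.mpr (by rwa [Matrix.spectrum_toLin'])
  obtain ⟨v, hv⟩ := hμ'.exists_hasEigenvector
  have hle : ∀ i, ‖μ‖ * ‖v i‖ ≤ ∑ j, M i j * ‖v j‖ := fun i => by
    calc ‖μ‖ * ‖v i‖ = ‖∑ j, (M i j : ℂ) * v j‖ := by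
          rw [← norm_mul]
          exact congrArg norm (congrFun hv.apply_eq_smul i).symm
      _ ≤ ∑ j, ‖(M i j : ℂ) * v j‖ := norm_sum_le _ _
      _ = ∑ j, M i j * ‖v j‖ := by simp [abs_of_nonneg (hM _ _)]
  have hstep : ∀ i, ∃ j, (0 < ‖v i‖ → M i j ≠ 0) ∧ ‖μ‖ * ‖v i‖ ≤ (∑ l, M i l) * ‖v j‖ := by
    intro i
    rcases (norm_nonneg (v i)).eq_or_lt with h₀ | hpos
    · exact ⟨i, fun h => absurd h₀.symm h.ne', by simp [← h₀]⟩
    have hrow : ∃ j, M i j ≠ 0 := by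
      by_contra! h
      have := (mul_pos (norm_pos_iff.mpr hμ₀) hpos).trans_le (hle i)
      simp [h] at this
    obtain ⟨j, hj, hsum⟩ := exists_ne_zero_sum_mul_le (hM i) hrow fun l => ‖v l‖
    exact ⟨j, fun _ => hj, (hle i).trans hsum⟩
  choose f hf hfv using hstep
  obtain ⟨i₀, hi₀⟩ := Function.ne_iff.mp hv.2
  obtain ⟨p, γ, hγ, hprod⟩ := exists_isCircuit_prod_le_prod
    (arc := fun i j => M i j ≠ 0) (a := fun _ => ‖μ‖)
    (fun _ => norm_pos_iff.mpr hμ₀) (fun i => norm_nonneg (v i)) hf hfv (norm_pos_iff.mpr hi₀)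
  exact ⟨p, γ, hγ, by simpa using hprod⟩

theorem exists_isCircuit_prod_le_pow [Nonempty (Fin n)] (hM : ∀ i j, 0 ≤ M i j)
    (hrow : ∀ i, ∃ j, M i j ≠ 0) {t : ℝ} {y : Fin n → ℝ} (hy : ∀ i, 0 < y i)
    (hMy : ∀ i, ∑ j, M i j * y j ≤ t * y i) :
    ∃ p γ, IsCircuit (fun i j : Fin n => M i j ≠ 0) p γ ∧
      ∏ j ∈ range p, ∑ l, M (γ j) l ≤ t ^ p := by
  choose f hf hfy using fun i => exists_ne_zero_le_sum_mul (hM i) (hrow i) y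
  have hr : ∀ i, 0 < ∑ l, M i l := fun i =>
    have ⟨j, hj⟩ := hrow i
    sum_pos' (fun l _ => hM i l) ⟨j, mem_univ _, (hM i j).lt_of_ne' hj⟩
  have hstep : ∀ i, (∑ l, M i l) * (y i)⁻¹ ≤ t * (y (f i))⁻¹ := fun i => by
    rw [← div_eq_mul_inv, ← div_eq_mul_inv, div_le_div_iff₀ (hy i) (hy (f i))]
    exact (hfy i).trans (hMy i)
  obtain ⟨p, γ, hγ, hprod⟩ := exists_isCircuit_prod_le_prod
    (arc := fun i j => M i j ≠ 0) (b := fun _ => t) hr (fun i => (inv_pos.mpr (hy i)).le)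
    (fun i _ => hf i) hstep (inv_pos.mpr (hy (Classical.arbitrary _)))
  exact ⟨p, γ, hγ, by simpa using hprod⟩

section LinftyNorm

-- Gelfand's formula holds for any algebra norm; the `ℓ∞` operator norm dominates row sums.
attribute [local instance] Matrix.linftyOpNormedRing Matrix.linftyOpNormedAlgebra

theorem sum_apply_le_norm_map_ofReal {N : Matrix (Fin n) (Fin n) ℝ} (hN : ∀ i j, 0 ≤ N i j)
    (i : Fin n) : ∑ j, N i j ≤ ‖N.map Complex.ofReal‖ := by
  rw [Matrix.linfty_opNorm_def]
  calc ∑ j, N i j = ((∑ j, ‖(N.map Complex.ofReal) i j‖₊ : NNReal) : ℝ) := by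
        push_cast
        simp [abs_of_nonneg (hN _ _)]
    _ ≤ _ := by
        exact_mod_cast le_sup (f := fun i => ∑ j, ‖(N.map Complex.ofReal) i j‖₊) (mem_univ i)

theorem exists_pos_sum_mul_le (hM : ∀ i j, 0 ≤ M i j) {t : ℝ}
    (h : spectralRadius ℂ (M.map Complex.ofReal) < ENNReal.ofReal t) :
    ∃ y : Fin n → ℝ, (∀ i, 0 < y i) ∧ ∀ i, ∑ j, M i j * y j ≤ t * y i := by
  have ht : 0 < t := ENNReal.ofReal_pos.mp (pos_of_gt h)
  have hMk := Matrix.pow_apply_nonneg hM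
  set g : ℕ → Fin n → ℝ := fun k i => (∑ j, (M ^ k) i j) / t ^ k
  have hg : ∀ k i, 0 ≤ g k i := fun k i =>
    div_nonneg (sum_nonneg fun j _ => hMk k i j) (pow_nonneg ht.le k)
  have hsum : ∀ i, Summable fun k => g k i := fun i =>
    (summable_norm_pow_div_pow_of_spectralRadius_lt h).of_nonneg_of_le (hg · i) fun k => by
      have hpow : M.map Complex.ofReal ^ k = (M ^ k).map Complex.ofReal :=
        (Matrix.map_pow M Complex.ofRealHom k).symm
      rw [hpow]
      exact div_le_div_of_nonneg_right (sum_apply_le_norm_map_ofReal (hMk k) i) (by positivity)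
  have hrec : ∀ k i, ∑ j, M i j * g k j = t * g (k + 1) i := fun k i => by
    have hrow : ∑ l, (M ^ (k + 1)) i l = ∑ j, M i j * ∑ l, (M ^ k) j l := by
      simp only [pow_succ', Matrix.mul_apply, mul_sum]
      exact sum_comm
    simp only [g]
    simp_rw [mul_div_assoc']
    rw [← sum_div, ← hrow]
    field_simp
    ring
  refine ⟨fun i => ∑' k, g k i, fun i => ?_, fun i => ?_⟩
  · refine one_pos.trans_le ?_
    simpa [g, Matrix.one_apply] using (hsum i).le_tsum 0 fun k _ => hg k i
  · calc ∑ j, M i j * ∑' k, g k j = ∑' k, ∑ j, M i j * g k j := by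
          rw [Summable.tsum_finsetSum fun j _ => (hsum j).mul_left _]
          simp_rw [tsum_mul_left]
      _ = t * ∑' k, g (k + 1) i := by simp_rw [hrec]; exact tsum_mul_left
      _ ≤ t * ∑' k, g k i := by
          rw [(hsum i).tsum_eq_zero_add]
          gcongr
          exact le_add_of_nonneg_left (hg 0 i)

end LinftyNorm

theorem mSpecRad_nonneg (M : Matrix (Fin n) (Fin n) ℝ) : 0 ≤ mSpecRad n M :=
  Real.sSup_nonneg (by rintro _ ⟨μ, -, rfl⟩; exact norm_nonneg μ)

theorem spectralRadius_lt_ofReal_of_mSpecRad_lt {t : ℝ} (ht : mSpecRad n M < t) :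
    spectralRadius ℂ (M.map Complex.ofReal) < ENNReal.ofReal t := by
  have hbdd := ((M.map Complex.ofReal).finite_spectrum.image norm).bddAbove
  refine lt_of_le_of_lt (iSup₂_le fun μ hμ => ?_)
    ((ENNReal.ofReal_lt_ofReal_iff_of_nonneg (mSpecRad_nonneg M)).mpr ht)
  rw [← ENNReal.ofReal_coe_nnreal, coe_nnnorm]
  exact ENNReal.ofReal_le_ofReal (le_csSup hbdd ⟨μ, hμ, rfl⟩)

def circuitMeans (M : Matrix (Fin n) (Fin n) ℝ) : Set ℝ :=
  {r : ℝ | ∃ (p : ℕ) (γ : ℕ → Fin n), IsCircuit (fun i j : Fin n => M i j ≠ 0) p γ ∧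
    r = (∏ j ∈ Finset.range p, (∑ l : Fin n, M (γ j) l)) ^ ((p : ℝ)⁻¹)}

theorem circuitMeans_nonneg (hM : ∀ i j, 0 ≤ M i j) : ∀ r ∈ circuitMeans M, 0 ≤ r := by
  rintro _ ⟨p, γ, -, rfl⟩
  exact Real.rpow_nonneg (prod_nonneg fun j _ => sum_nonneg fun l _ => hM _ l) _

theorem bddAbove_circuitMeans (hM : ∀ i j, 0 ≤ M i j) : BddAbove (circuitMeans M) := by
  have hr : ∀ i, 0 ≤ ∑ l, M i l := fun i => sum_nonneg fun l _ => hM i l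
  refine ⟨∑ i, ∑ l, M i l, ?_⟩
  rintro _ ⟨p, γ, hγ, rfl⟩
  rw [Real.rpow_inv_le_iff_of_pos (prod_nonneg fun j _ => hr _) (sum_nonneg fun i _ => hr i)
    (by exact_mod_cast hγ.1), Real.rpow_natCast]
  calc ∏ j ∈ range p, ∑ l, M (γ j) l ≤ ∏ _j ∈ range p, ∑ i, ∑ l, M i l :=
        prod_le_prod (fun j _ => hr _) fun j _ => single_le_sum (fun i _ => hr i) (mem_univ _)
    _ = _ := by rw [prod_const, card_range]

theorem le_sSup_circuitMeans (hM : ∀ i j, 0 ≤ M i j) {p : ℕ} {γ : ℕ → Fin n}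
    (hγ : IsCircuit (fun i j : Fin n => M i j ≠ 0) p γ) {c : ℝ} (hc : 0 ≤ c)
    (h : c ^ p ≤ ∏ j ∈ range p, ∑ l, M (γ j) l) : c ≤ sSup (circuitMeans M) := by
  refine le_csSup_of_le (bddAbove_circuitMeans hM) ⟨p, γ, hγ, rfl⟩ ?_
  rwa [Real.le_rpow_inv_iff_of_pos hc (prod_nonneg fun j _ => sum_nonneg fun l _ => hM _ l)
    (by exact_mod_cast hγ.1), Real.rpow_natCast]

theorem sInf_circuitMeans_le (hM : ∀ i j, 0 ≤ M i j) {p : ℕ} {γ : ℕ → Fin n}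
    (hγ : IsCircuit (fun i j : Fin n => M i j ≠ 0) p γ) {c : ℝ} (hc : 0 ≤ c)
    (h : ∏ j ∈ range p, ∑ l, M (γ j) l ≤ c ^ p) : sInf (circuitMeans M) ≤ c := by
  refine csInf_le_of_le ⟨0, circuitMeans_nonneg hM⟩ ⟨p, γ, hγ, rfl⟩ ?_
  rwa [Real.rpow_inv_le_iff_of_pos (prod_nonneg fun j _ => sum_nonneg fun l _ => hM _ l) hc
    (by exact_mod_cast hγ.1), Real.rpow_natCast]

theorem mSpecRad_le_sSup_circuitMeans (hM : ∀ i j, 0 ≤ M i j) :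
    mSpecRad n M ≤ sSup (circuitMeans M) := by
  have hS := Real.sSup_nonneg (circuitMeans_nonneg hM)
  refine Real.sSup_le ?_ hS
  rintro _ ⟨μ, hμ, rfl⟩
  rcases eq_or_ne μ 0 with rfl | hμ₀
  · simpa using hS
  obtain ⟨p, γ, hγ, h⟩ := exists_isCircuit_norm_pow_le hM hμ hμ₀
  exact le_sSup_circuitMeans hM hγ (norm_nonneg μ) h

theorem sInf_circuitMeans_le_mSpecRad (hM : ∀ i j, 0 ≤ M i j)
    (hirr : StronglyConnected fun i j : Fin n => M i j ≠ 0) :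
    sInf (circuitMeans M) ≤ mSpecRad n M := by
  rcases (circuitMeans M).eq_empty_or_nonempty with hS | ⟨_, p₀, γ₀, hγ₀, -⟩
  · rw [hS, Real.sInf_empty]
    exact mSpecRad_nonneg M
  have : Nonempty (Fin n) := ⟨γ₀ 0⟩
  have hrow := hirr.exists_arc (hγ₀.2.2 0 hγ₀.1)
  refine le_of_forall_gt_imp_ge_of_dense fun t ht => ?_
  obtain ⟨y, hy, hMy⟩ := exists_pos_sum_mul_le hM (spectralRadius_lt_ofReal_of_mSpecRad_lt ht)
  obtain ⟨p, γ, hγ, h⟩ := exists_isCircuit_prod_le_pow hM hrow hy hMy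
  exact sInf_circuitMeans_le hM hγ ((mSpecRad_nonneg M).trans ht.le) h

end

theorem stmt18_general (n : ℕ) (M : Matrix (Fin n) (Fin n) ℝ)
    (hM : ∀ i j, 0 ≤ M i j)
    (hirr : StronglyConnected (fun i j : Fin n => M i j ≠ 0)) :
    sInf {r : ℝ | ∃ (p : ℕ) (γ : ℕ → Fin n), IsCircuit (fun i j : Fin n => M i j ≠ 0) p γ ∧
        r = (∏ j ∈ Finset.range p, (∑ l : Fin n, M (γ j) l)) ^ ((p : ℝ)⁻¹)}
      ≤ mSpecRad n M ∧
    mSpecRad n M ≤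
      sSup {r : ℝ | ∃ (p : ℕ) (γ : ℕ → Fin n), IsCircuit (fun i j : Fin n => M i j ≠ 0) p γ ∧
        r = (∏ j ∈ Finset.range p, (∑ l : Fin n, M (γ j) l)) ^ ((p : ℝ)⁻¹)} :=
  ⟨sInf_circuitMeans_le_mSpecRad hM hirr, mSpecRad_le_sSup_circuitMeans hM⟩

theorem stmt18 (n : ℕ) (hn : 0 < n) (M : Matrix (Fin n) (Fin n) ℝ)
    (hM : ∀ i j, 0 ≤ M i j)
    (hirr : StronglyConnected (fun i j : Fin n => M i j ≠ 0)) :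
    sInf {r : ℝ | ∃ (p : ℕ) (γ : ℕ → Fin n), IsCircuit (fun i j : Fin n => M i j ≠ 0) p γ ∧
        r = (∏ j ∈ Finset.range p, (∑ l : Fin n, M (γ j) l)) ^ ((p : ℝ)⁻¹)}
      ≤ mSpecRad n M ∧
    mSpecRad n M ≤
      sSup {r : ℝ | ∃ (p : ℕ) (γ : ℕ → Fin n), IsCircuit (fun i j : Fin n => M i j ≠ 0) p γ ∧
        r = (∏ j ∈ Finset.range p, (∑ l : Fin n, M (γ j) l)) ^ ((p : ℝ)⁻¹)} :=
  stmt18_general n M hM hirr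
end
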